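/- Fix σ > 0, μ₀ ≥ 0, thresholds τ* > τ ≥ 0, an integer C_u ≥ 1, and ε ≥ 0. Let q = Φ((τ*-τ)/σ), μ(a) = √(a/σ² + aμ₀²), f(μ,ε) = Φ(μ/2 - ε/μ) - e^εΦ(-μ/2 - ε/μ). Define δ* as the maximum of: (i) 1 - q^{C_u}; (ii) max over a₊ + a₌ = C_u, a₊ > 0 of 1 - q^{a₌} + q^{a₌} f(μ(a₊), ε - a₌ ln q); (iii) max over a₊ + a₌ = C_u, a₊ > 0 of f(μ(a₊), ε + a₌ ln q). Then max(1 - q^{C_u}, f(μ(C_u), ε)) ≤ δ* < (1 - q^{C_u}) + f(μ(C_u), ε), provided both 1 - q^{C_u} > 0 and f(μ(C_u), ε) > 0. -/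

import Mathlib

noncomputable def stdNormalPDF (x : ℝ) : ℝ :=
  (Real.sqrt (2 * Real.pi))⁻¹ * Real.exp (-x ^ 2 / 2)

noncomputable def stdNormalCDF (x : ℝ) : ℝ := ∫ t in Set.Iic x, stdNormalPDF t

noncomputable def gaussF (μ ε : ℝ) : ℝ :=
  stdNormalCDF (μ / 2 - ε / μ) - Real.exp ε * stdNormalCDF (-μ / 2 - ε / μ)

/-!
The lower bound holds because `1 - q ^ Cu` and `f(μ(Cu), ε)` (the term `a₌ = 0` of (iii)) both
occur in the maximum. For the upper bound, every term of (ii) and (iii) with `a₌ < Cu` is at most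
`1 - q ^ a₌ + q ^ a₌ f(μ(a₊), ε)`: for (ii) because `f` decreases in `ε` and `-a₌ ln q ≥ 0`,
for (iii) by `f(μ, ε + ln β) ≤ 1 - β + β f(μ, ε)`, which follows from the likelihood-ratio bound
`φ(x - μ) ≤ e^ε φ(x)` for `x ≤ ε / μ + μ / 2`. Since `f` increases in `μ`, `μ(a₊) ≤ μ(Cu)` and
`q ^ Cu < q ^ a₌`, this is strictly below `1 - q ^ Cu + f(μ(Cu), ε)`.
-/

open MeasureTheory ProbabilityTheory Real Set

lemma stdNormalPDF_eq_gaussianPDFReal : stdNormalPDF = gaussianPDFReal 0 1 := by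
  ext x
  simp [stdNormalPDF, gaussianPDFReal]

lemma stdNormalPDF_pos (x : ℝ) : 0 < stdNormalPDF x := by
  unfold stdNormalPDF
  positivity

lemma continuous_stdNormalPDF : Continuous stdNormalPDF := by
  unfold stdNormalPDF
  fun_prop

lemma integrable_stdNormalPDF : Integrable stdNormalPDF := by
  rw [stdNormalPDF_eq_gaussianPDFReal]
  exact integrable_gaussianPDFReal 0 1

lemma integral_stdNormalPDF : ∫ x, stdNormalPDF x = 1 := by
  rw [stdNormalPDF_eq_gaussianPDFReal]
  exact integral_gaussianPDFReal_eq_one 0 one_ne_zero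

lemma stdNormalPDF_neg (x : ℝ) : stdNormalPDF (-x) = stdNormalPDF x := by
  simp [stdNormalPDF]

lemma stdNormalPDF_sub (x μ : ℝ) :
    stdNormalPDF (x - μ) = exp (μ * x - μ ^ 2 / 2) * stdNormalPDF x := by
  simp only [stdNormalPDF]
  rw [mul_left_comm, ← exp_add]
  ring_nf

lemma stdNormalCDF_sub_stdNormalCDF (a b : ℝ) :
    stdNormalCDF b - stdNormalCDF a = ∫ x in a..b, stdNormalPDF x :=
  intervalIntegral.integral_Iic_sub_Iic integrable_stdNormalPDF.integrableOn
    integrable_stdNormalPDF.integrableOn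

lemma stdNormalCDF_pos (x : ℝ) : 0 < stdNormalCDF x := by
  rw [stdNormalCDF, setIntegral_pos_iff_support_of_nonneg_ae
    (.of_forall fun t => (stdNormalPDF_pos t).le) integrable_stdNormalPDF.integrableOn,
    Function.support_eq_univ fun t => (stdNormalPDF_pos t).ne', univ_inter]
  simp

lemma stdNormalCDF_neg (x : ℝ) : stdNormalCDF (-x) = 1 - stdNormalCDF x := by
  have hsplit := intervalIntegral.integral_Iic_add_Ioi (b := x)
    integrable_stdNormalPDF.integrableOn integrable_stdNormalPDF.integrableOn
  rw [integral_stdNormalPDF] at hsplit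
  rw [stdNormalCDF, stdNormalCDF, ← integral_comp_neg_Ioi]
  simp only [stdNormalPDF_neg]
  linarith

lemma stdNormalCDF_lt_one (x : ℝ) : stdNormalCDF x < 1 := by
  have h := stdNormalCDF_neg (-x)
  rw [neg_neg] at h
  linarith [stdNormalCDF_pos (-x)]

lemma hasDerivAt_stdNormalCDF (x : ℝ) : HasDerivAt stdNormalCDF (stdNormalPDF x) x := by
  have hΦ : stdNormalCDF = fun y => stdNormalCDF 0 + ∫ t in (0 : ℝ)..y, stdNormalPDF t := by
    ext y
    rw [← stdNormalCDF_sub_stdNormalCDF]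
    ring
  rw [hΦ]
  exact (intervalIntegral.integral_hasDerivAt_right integrable_stdNormalPDF.intervalIntegrable
    (continuous_stdNormalPDF.stronglyMeasurableAtFilter _ _)
    continuous_stdNormalPDF.continuousAt).const_add _

-- On `x ≤ ε / μ + μ / 2` the density of `N(μ, 1)` is at most `e^ε` times that of `N(0, 1)`.
lemma stdNormalCDF_sub_shift_le {μ ε s t : ℝ} (hμ : 0 ≤ μ) (hst : s ≤ t)
    (ht : μ * t - μ ^ 2 / 2 ≤ ε) :
    stdNormalCDF (t - μ) - stdNormalCDF (s - μ) ≤ exp ε * (stdNormalCDF t - stdNormalCDF s) := by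
  rw [stdNormalCDF_sub_stdNormalCDF, stdNormalCDF_sub_stdNormalCDF,
    ← intervalIntegral.integral_comp_sub_right, ← intervalIntegral.integral_const_mul]
  refine intervalIntegral.integral_mono_on hst
    (integrable_stdNormalPDF.comp_sub_right μ).intervalIntegrable
    (integrable_stdNormalPDF.const_mul _).intervalIntegrable fun x hx => ?_
  rw [stdNormalPDF_sub]
  exact mul_le_mul_of_nonneg_right (exp_le_exp.2 (by nlinarith [hx.2])) (stdNormalPDF_pos x).le

lemma gaussF_eq_tail (μ ε : ℝ) :
    gaussF μ ε = (1 - stdNormalCDF (ε / μ - μ / 2)) - exp ε * (1 - stdNormalCDF (ε / μ + μ / 2)) := by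
  rw [gaussF, ← stdNormalCDF_neg, ← stdNormalCDF_neg]
  ring_nf

theorem HasDerivAt.gaussF {f g : ℝ → ℝ} {f' g' t : ℝ} (hf : HasDerivAt f f' t)
    (hg : HasDerivAt g g' t) (hf0 : f t ≠ 0) :
    HasDerivAt (fun s => gaussF (f s) (g s))
      (stdNormalPDF (f t / 2 - g t / f t) * f'
        - g' * Real.exp (g t) * stdNormalCDF (-f t / 2 - g t / f t)) t := by
  set a : ℝ → ℝ := fun s => f s / 2 - g s / f s with ha_def
  obtain ⟨a', ha⟩ : ∃ a', HasDerivAt a a' t := ⟨_, (hf.div_const 2).sub (hg.div hf hf0)⟩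
  have hF : (fun s => _root_.gaussF (f s) (g s)) =
      fun s => stdNormalCDF (a s) - Real.exp (g s) * stdNormalCDF (a s - f s) := by
    ext s
    simp only [_root_.gaussF, ha_def]
    ring_nf
  -- the `a'` terms cancel because `e^ε φ(a - μ) = φ(a)`
  have hratio : Real.exp (g t) * stdNormalPDF (a t - f t) = stdNormalPDF (a t) := by
    rw [stdNormalPDF_sub, ← mul_assoc, ← Real.exp_add, ha_def]
    convert one_mul _
    rw [Real.exp_eq_one_iff]
    field_simp
    ring
  rw [hF]
  refine (((hasDerivAt_stdNormalCDF _).comp t ha).sub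
    (hg.exp.mul ((hasDerivAt_stdNormalCDF _).comp t (ha.sub hf)))).congr_deriv ?_
  have hb : -f t / 2 - g t / f t = a t - f t := by simp only [ha_def]; ring
  rw [hb, show f t / 2 - g t / f t = a t from rfl]
  simp only [Function.comp_apply, Pi.sub_apply]
  linear_combination (f' - a') * hratio
lemma gaussF_antitone {μ : ℝ} (hμ : μ ≠ 0) : Antitone (gaussF μ) := by
  refine antitone_of_hasDerivAt_nonpos
    (fun ε => (hasDerivAt_const ε μ).gaussF (hasDerivAt_id ε) hμ) fun ε => ?_
  have := stdNormalCDF_pos (-μ / 2 - ε / μ)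
  simp only [mul_zero, one_mul, zero_sub, Pi.zero_apply, neg_nonpos]
  positivity

lemma gaussF_monotoneOn (ε : ℝ) : MonotoneOn (fun μ => gaussF μ ε) (Ioi 0) := by
  have hderiv : ∀ μ ∈ Ioi (0 : ℝ),
      HasDerivAt (fun μ => gaussF μ ε) (stdNormalPDF (μ / 2 - ε / μ)) μ := fun μ hμ => by
    simpa using (hasDerivAt_id μ).gaussF (hasDerivAt_const μ ε) (ne_of_gt hμ)
  refine monotoneOn_of_hasDerivWithinAt_nonneg (convex_Ioi 0)
    (fun μ hμ => (hderiv μ hμ).continuousAt.continuousWithinAt) ?_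
    fun μ _ => (stdNormalPDF_pos (μ / 2 - ε / μ)).le
  rw [interior_Ioi]
  exact fun μ hμ => (hderiv μ hμ).hasDerivWithinAt

lemma gaussF_add_log_le {μ ε β : ℝ} (hμ : 0 < μ) (hβ0 : 0 < β) (hβ1 : β ≤ 1) :
    gaussF μ (ε + log β) ≤ 1 - β + β * gaussF μ ε := by
  have hst : (ε + log β) / μ + μ / 2 ≤ ε / μ + μ / 2 := by
    gcongr
    linarith [log_nonpos hβ0.le hβ1]
  have ht : μ * (ε / μ + μ / 2) - μ ^ 2 / 2 ≤ ε := le_of_eq (by field_simp; ring)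
  have key := stdNormalCDF_sub_shift_le hμ.le hst ht
  rw [show ε / μ + μ / 2 - μ = ε / μ - μ / 2 by ring,
    show (ε + log β) / μ + μ / 2 - μ = (ε + log β) / μ - μ / 2 by ring] at key
  rw [gaussF_eq_tail, gaussF_eq_tail, exp_add, exp_log hβ0]
  nlinarith [mul_le_mul_of_nonneg_left key hβ0.le,
    mul_nonneg (sub_nonneg.2 hβ1) (stdNormalCDF_pos ((ε + log β) / μ - μ / 2)).le]

lemma one_sub_pow_add_pow_mul_lt {q F G : ℝ} {a n : ℕ} (hq0 : 0 < q) (hq1 : q < 1) (han : a < n)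
    (hGF : G ≤ F) (hF : 0 ≤ F) : 1 - q ^ a + q ^ a * G < 1 - q ^ n + F := by
  have hqG : q ^ a * G ≤ F := (mul_le_mul_of_nonneg_left hGF (by positivity)).trans
    (mul_le_of_le_one_left hF (pow_le_one₀ hq0.le hq1.le))
  linarith [pow_lt_pow_right_of_lt_one₀ hq0 hq1 han]

theorem gshm_delta_sandwich_general (σ μ₀ τ τs : ℝ) (hσ : 0 < σ)
    (Cu : ℕ) (ε : ℝ)
    (q : ℝ) (hq : q = stdNormalCDF ((τs - τ) / σ))
    (μfun : ℕ → ℝ) (hμfun : ∀ a : ℕ, μfun a = Real.sqrt ((a : ℝ) / σ ^ 2 + (a : ℝ) * μ₀ ^ 2))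
    (hne : (Finset.range Cu).Nonempty)
    (δstar : ℝ)
    (hδstar : δstar =
      max (1 - q ^ Cu)
        (max
          ((Finset.range Cu).sup' hne (fun aeq =>
            1 - q ^ aeq + q ^ aeq *
              gaussF (μfun (Cu - aeq)) (ε - (aeq : ℝ) * Real.log q)))
          ((Finset.range Cu).sup' hne (fun aeq =>
            gaussF (μfun (Cu - aeq)) (ε + (aeq : ℝ) * Real.log q)))))
    (hδG_pos : 0 < gaussF (μfun Cu) ε) :
    max (1 - q ^ Cu) (gaussF (μfun Cu) ε) ≤ δstar ∧
      δstar < (1 - q ^ Cu) + gaussF (μfun Cu) ε := by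
  have hq0 : 0 < q := hq ▸ stdNormalCDF_pos _
  have hq1 : q < 1 := hq ▸ stdNormalCDF_lt_one _
  have hCu : 0 < Cu := Nat.pos_of_ne_zero (Finset.nonempty_range_iff.mp hne)
  have hμ_pos : ∀ a, 0 < a → 0 < μfun a := fun a ha => by
    have : (0 : ℝ) < a := Nat.cast_pos.2 ha
    rw [hμfun]
    positivity
  have hterm : ∀ a < Cu,
      1 - q ^ a + q ^ a * gaussF (μfun (Cu - a)) ε < 1 - q ^ Cu + gaussF (μfun Cu) ε :=
    fun a ha => one_sub_pow_add_pow_mul_lt hq0 hq1 ha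
      (gaussF_monotoneOn ε (hμ_pos _ (Nat.sub_pos_of_lt ha)) (hμ_pos _ hCu)
        (by rw [hμfun, hμfun]; gcongr <;> exact_mod_cast Nat.sub_le Cu a)) hδG_pos.le
  have hii : ∀ a < Cu, 1 - q ^ a + q ^ a * gaussF (μfun (Cu - a)) (ε - a * log q) ≤
      1 - q ^ a + q ^ a * gaussF (μfun (Cu - a)) ε := fun a ha => by
    have : 0 ≤ -(a : ℝ) * log q :=
      mul_nonneg_of_nonpos_of_nonpos (by simp) (log_nonpos hq0.le hq1.le)
    gcongr
    exact gaussF_antitone (hμ_pos _ (Nat.sub_pos_of_lt ha)).ne' (by linarith)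
  have hiii : ∀ a < Cu, gaussF (μfun (Cu - a)) (ε + a * log q) ≤
      1 - q ^ a + q ^ a * gaussF (μfun (Cu - a)) ε := fun a ha => by
    rw [← log_pow]
    exact gaussF_add_log_le (hμ_pos _ (Nat.sub_pos_of_lt ha)) (pow_pos hq0 a)
      (pow_le_one₀ hq0.le hq1.le)
  rw [hδstar]
  refine ⟨max_le_max le_rfl (le_max_of_le_right
    (Finset.le_sup'_of_le _ (Finset.mem_range.2 hCu) (by simp))),
    max_lt (by linarith) (max_lt ?_ ?_)⟩ <;> refine (Finset.sup'_lt_iff _).2 fun a ha => ?_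
  · exact (hii a (Finset.mem_range.1 ha)).trans_lt (hterm a (Finset.mem_range.1 ha))
  · exact (hiii a (Finset.mem_range.1 ha)).trans_lt (hterm a (Finset.mem_range.1 ha))

theorem gshm_delta_sandwich (σ μ₀ τ τs : ℝ) (hσ : 0 < σ) (hμ₀ : 0 ≤ μ₀)
    (hτ0 : 0 ≤ τ) (hτ : τ < τs) (Cu : ℕ) (hCu : 1 ≤ Cu) (ε : ℝ) (hε : 0 ≤ ε)
    (q : ℝ) (hq : q = stdNormalCDF ((τs - τ) / σ))
    (μfun : ℕ → ℝ) (hμfun : ∀ a : ℕ, μfun a = Real.sqrt ((a : ℝ) / σ ^ 2 + (a : ℝ) * μ₀ ^ 2))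
    (hne : (Finset.range Cu).Nonempty)
    (δstar : ℝ)
    (hδstar : δstar =
      max (1 - q ^ Cu)
        (max
          ((Finset.range Cu).sup' hne (fun aeq =>
            1 - q ^ aeq + q ^ aeq *
              gaussF (μfun (Cu - aeq)) (ε - (aeq : ℝ) * Real.log q)))
          ((Finset.range Cu).sup' hne (fun aeq =>
            gaussF (μfun (Cu - aeq)) (ε + (aeq : ℝ) * Real.log q)))))
    (hδinf_pos : 0 < 1 - q ^ Cu) (hδG_pos : 0 < gaussF (μfun Cu) ε) :
    max (1 - q ^ Cu) (gaussF (μfun Cu) ε) ≤ δstar ∧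
      δstar < (1 - q ^ Cu) + gaussF (μfun Cu) ε :=
  gshm_delta_sandwich_general σ μ₀ τ τs hσ Cu ε q hq μfun hμfun hne δstar hδstar hδG_pos
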